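/- Under the stated setting, suppose in addition that ∑_{k=0}^∞ max_{i,j∈{1,…,N}} |α_i(k) − α_j(k)| < ∞ (condition (c')). Then the multi-agent system achieves almost sure consensus (Corollary 3): there exists a random variable x* : Ω → ℝ such that for every i ∈ {1,…,N}, x_i(k) → x* almost surely as k → ∞. -/

import Mathlib

/-!
The noise series `∑ A(k) w(k)` is an `L²`-bounded martingale, so it converges almost surely;
adding its tail `t k = ∑_{j ≥ k} A(j) w(j)` to the state leaves a noiseless recursion. Let `y k`
be the disagreement part of the shifted state, its component orthogonal to the consensus line
`ℝ ∙ 𝟙`. With the common stepsize `a k = α_{i₀}(k)`, the spectral gap makes `I - a k L̄` a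
contraction by `1 - λ a k / 2` on the disagreement subspace, while the heterogeneity
`A(k) - a k I` has norm at most the summable `e k = max_{i,j} |α_i(k) - α_j(k)|`. Hence
`‖y (k+1)‖ ≤ (1 - β k + ε k) ‖y k‖ + β k δ k + γ k` with `β k = λ a k / 2` not summable,
`ε k = ‖L̄‖ e k` summable, and `δ k`, `γ k` controlled by `‖t k‖ → 0`; this forces `‖y k‖ → 0`. The consensus component changes only through the
heterogeneity, by a summable amount, so it converges too.
-/

open Filter Topology Finset MeasureTheory
open scoped RealInnerProductSpace

theorem tendsto_prod_Ico_one_sub_of_not_summable {β : ℕ → ℝ} {n : ℕ}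
    (hβ0 : ∀ k, 0 ≤ β k) (hβ1 : ∀ k ≥ n, β k ≤ 1) (hβ : ¬Summable β) :
    Tendsto (fun m => ∏ k ∈ Ico n m, (1 - β k)) atTop (𝓝 0) := by
  have hexp : Tendsto (fun m => Real.exp (-(∑ k ∈ range m, β k - ∑ k ∈ range n, β k)))
      atTop (𝓝 0) :=
    Real.tendsto_exp_atBot.comp <| tendsto_neg_atTop_atBot.comp <|
      tendsto_atTop_add_const_right _ _ ((not_summable_iff_tendsto_nat_atTop_of_nonneg hβ0).1 hβ)
  refine squeeze_zero' (Eventually.of_forall fun m => prod_nonneg fun k hk => ?_) ?_ hexp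
  · linarith [hβ1 k (mem_Ico.1 hk).1]
  filter_upwards [eventually_ge_atTop n] with m hm
  rw [← sum_Ico_eq_sub _ hm, ← sum_neg_distrib, Real.exp_sum]
  refine prod_le_prod (fun k hk => ?_) fun k _ => ?_
  · linarith [hβ1 k (mem_Ico.1 hk).1]
  · linarith [Real.add_one_le_exp (-β k)]

theorem tendsto_zero_of_contractive_recursion {Z β δ γ : ℕ → ℝ} (hZ : ∀ k, 0 ≤ Z k)
    (hβ0 : ∀ k, 0 ≤ β k) (hβ1 : ∀ᶠ k in atTop, β k ≤ 1) (hβ : ¬Summable β)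
    (hδ : Tendsto δ atTop (𝓝 0)) (hγ0 : ∀ k, 0 ≤ γ k) (hγ : Summable γ)
    (hrec : ∀ᶠ k in atTop, Z (k + 1) ≤ (1 - β k) * Z k + β k * δ k + γ k) :
    Tendsto Z atTop (𝓝 0) := by
  refine tendsto_order.2 ⟨fun b hb => .of_forall fun k => hb.trans_le (hZ k), fun η hη => ?_⟩
  have hγtail : Tendsto (fun n => ∑' k, γ k - ∑ k ∈ range n, γ k) atTop (𝓝 0) := by
    simpa using (tendsto_const_nhds (x := ∑' k, γ k)).sub hγ.tendsto_sum_tsum_nat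
  obtain ⟨n, hn⟩ := eventually_atTop.1 <| hβ1.and <| hrec.and <|
    (hδ.eventually_le_const (by positivity : 0 < η / 4)).and
    (hγtail.eventually_le_const (by positivity : 0 < η / 4))
  -- From `n` on `δ k ≤ η / 4`, and `η / 4` is a fixed point of `Z ↦ (1 - β k) Z + β k (η / 4)`.
  have hunroll : ∀ m ≥ n,
      Z m ≤ (∏ k ∈ Ico n m, (1 - β k)) * Z n + η / 4 + ∑ k ∈ Ico n m, γ k := by
    intro m hm
    induction m, hm using Nat.le_induction with
    | base =>
      simp only [Ico_self, prod_empty, sum_empty, one_mul, add_zero]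
      linarith
    | succ m hm ih =>
      obtain ⟨hβm, hrecm, hδm, -⟩ := hn m hm
      rw [prod_Ico_succ_top hm, sum_Ico_succ_top hm]
      have h1 := mul_le_mul_of_nonneg_left ih (sub_nonneg.2 hβm)
      have h2 := mul_le_mul_of_nonneg_left hδm (hβ0 m)
      have h3 := mul_nonneg (hβ0 m) (sum_nonneg fun k (_ : k ∈ Ico n m) => hγ0 k)
      nlinarith
  have htail : ∀ m ≥ n, ∑ k ∈ Ico n m, γ k ≤ η / 4 := fun m hm => by
    rw [sum_Ico_eq_sub _ hm]
    linarith [(hn n le_rfl).2.2.2, hγ.sum_le_tsum (range m) fun k _ => hγ0 k]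
  have hprod := (tendsto_prod_Ico_one_sub_of_not_summable hβ0 (fun k hk => (hn k hk).1)
    hβ).mul_const (Z n)
  rw [zero_mul] at hprod
  filter_upwards [eventually_ge_atTop n, hprod.eventually_le_const (by positivity : 0 < η / 4)]
    with m hm hm'
  linarith [hunroll m hm, htail m hm]

theorem tendsto_zero_of_perturbed_contractive_recursion {Y β ε δ γ : ℕ → ℝ}
    (hY : ∀ k, 0 ≤ Y k) (hβ0 : ∀ k, 0 ≤ β k) (hβ1 : ∀ᶠ k in atTop, β k ≤ 1 / 2) (hβ : ¬Summable β)
    (hε0 : ∀ k, 0 ≤ ε k) (hε : Summable ε) (hδ0 : ∀ k, 0 ≤ δ k) (hδ : Tendsto δ atTop (𝓝 0))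
    (hγ0 : ∀ k, 0 ≤ γ k) (hγ : Summable γ)
    (hrec : ∀ᶠ k in atTop, Y (k + 1) ≤ (1 - β k + ε k) * Y k + β k * δ k + γ k) :
    Tendsto Y atTop (𝓝 0) := by
  -- Dividing by `p n = ∏_{k < n} (1 + 2 ε k)`, which converges, removes the `ε`-term.
  set p : ℕ → ℝ := fun n => ∏ k ∈ range n, (1 + 2 * ε k)
  have hp1 : ∀ n, 1 ≤ p n := fun n =>
    Finset.one_le_prod fun k _ => by linarith [hε0 k]
  have hp : Tendsto p atTop (𝓝 (∏' k, (1 + 2 * ε k))) :=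
    (Real.multipliable_one_add_of_summable (hε.mul_left 2)).tendsto_prod_tprod_nat
  have hZ : Tendsto (fun k => Y k / p k) atTop (𝓝 0) := by
    refine tendsto_zero_of_contractive_recursion
      (fun k => div_nonneg (hY k) (by linarith [hp1 k])) hβ0
      (hβ1.mono fun k h => by linarith) hβ hδ hγ0 hγ ?_
    filter_upwards [hβ1, hrec] with k hβk hk
    have hstep : p (k + 1) = p k * (1 + 2 * ε k) := prod_range_succ _ _
    have hf : 0 ≤ β k * δ k + γ k := add_nonneg (mul_nonneg (hβ0 k) (hδ0 k)) (hγ0 k)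
    have hp0 : 0 < p k := by linarith [hp1 k]
    rw [hstep, div_le_iff₀ (by nlinarith [hε0 k])]
    calc Y (k + 1) ≤ (1 - β k + ε k) * Y k + (β k * δ k + γ k) := by linarith
      _ ≤ (1 - β k) * (1 + 2 * ε k) * Y k + (β k * δ k + γ k) * (p k * (1 + 2 * ε k)) := by
        have h1 : 0 ≤ ε k * (1 - 2 * β k) * Y k :=
          mul_nonneg (mul_nonneg (hε0 k) (by linarith)) (hY k)
        have h2 : 0 ≤ (β k * δ k + γ k) * (p k * (1 + 2 * ε k) - 1) :=
          mul_nonneg hf (by nlinarith [hε0 k, hp1 k])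
        nlinarith
      _ = ((1 - β k) * (Y k / p k) + β k * δ k + γ k) * (p k * (1 + 2 * ε k)) := by
        field_simp
        ring
  simpa using (hp.mul hZ).congr fun k => mul_div_cancel₀ _ (by linarith [hp1 k])

section Consensus

variable {E : Type*} [NormedAddCommGroup E] [InnerProductSpace ℝ E]

theorem norm_sub_smul_le_of_coercive {L : E →L[ℝ] E} {lam a : ℝ} {v : E}
    (hv : lam * ‖v‖ ^ 2 ≤ ⟪v, L v⟫) (ha : 0 ≤ a) (haL : a * ‖L‖ ^ 2 ≤ lam)
    (hal : a * lam ≤ 2) :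
    ‖v - a • L v‖ ≤ (1 - a * lam / 2) * ‖v‖ := by
  have hLv : ‖L v‖ ≤ ‖L‖ * ‖v‖ := L.le_opNorm v
  refine (pow_le_pow_iff_left₀ (norm_nonneg _) (by nlinarith [norm_nonneg v]) two_ne_zero).1 ?_
  rw [norm_sub_sq_real, inner_smul_right, norm_smul, Real.norm_of_nonneg ha]
  have h1 : a * (lam * ‖v‖ ^ 2) ≤ a * ⟪v, L v⟫ := mul_le_mul_of_nonneg_left hv ha
  have h2 : (a * ‖L v‖) ^ 2 ≤ (a * (‖L‖ * ‖v‖)) ^ 2 :=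
    pow_le_pow_left₀ (mul_nonneg ha (norm_nonneg _)) (mul_le_mul_of_nonneg_left hLv ha) 2
  have h3 : a * ‖L‖ ^ 2 * (a * ‖v‖ ^ 2) ≤ lam * (a * ‖v‖ ^ 2) :=
    mul_le_mul_of_nonneg_right haL (mul_nonneg ha (sq_nonneg _))
  nlinarith [sq_nonneg (a * lam * ‖v‖)]

variable (K : Submodule ℝ E) [K.HasOrthogonalProjection] {L : E →L[ℝ] E}

theorem starProjection_map_eq_zero (hL : (L : E →ₗ[ℝ] E).IsSymmetric)
    (hLK : ∀ v ∈ K, L v = 0) (v : E) : K.starProjection (L v) = 0 := by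
  refine (K.starProjection_apply_eq_zero_iff).2 fun w hw => ?_
  rw [← ContinuousLinearMap.coe_coe L, ← hL, ContinuousLinearMap.coe_coe, hLK w hw,
    inner_zero_left]

theorem map_starProjection_orthogonal (hLK : ∀ v ∈ K, L v = 0) (v : E) :
    L (Kᗮ.starProjection v) = L v := by
  conv_rhs => rw [← K.starProjection_add_starProjection_orthogonal v]
  rw [map_add, hLK _ (K.starProjection_apply_mem v), zero_add]

theorem norm_starProjection_map_map_le (hL : (L : E →ₗ[ℝ] E).IsSymmetric)
    (hLK : ∀ v ∈ K, L v = 0) {D : E →L[ℝ] E} {a e : ℝ} (hD : ‖D - a • 1‖ ≤ e) (w : E) :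
    ‖K.starProjection (D (L w))‖ ≤ e * ‖L w‖ := by
  have hsplit : D (L w) = a • L w + (D - a • 1) (L w) := by simp
  rw [hsplit, map_add, map_smul, starProjection_map_eq_zero K hL hLK, smul_zero, zero_add]
  exact (K.norm_starProjection_apply_le _).trans (((D - a • 1).le_opNorm _).trans
    (mul_le_mul_of_nonneg_right hD (norm_nonneg _)))

theorem norm_starProjection_orthogonal_step_le (hL : (L : E →ₗ[ℝ] E).IsSymmetric)
    (hLK : ∀ v ∈ K, L v = 0) {lam : ℝ} (hcoer : ∀ v ∈ Kᗮ, lam * ‖v‖ ^ 2 ≤ ⟪v, L v⟫)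
    {D : E →L[ℝ] E} {a e : ℝ} (ha : 0 ≤ a) (haL : a * ‖L‖ ^ 2 ≤ lam) (hal : a * lam ≤ 2)
    (hD : ‖D - a • 1‖ ≤ e) (z t : E) :
    ‖Kᗮ.starProjection (z - D (L (z - t)))‖ ≤
      (1 - a * lam / 2 + ‖L‖ * e) * ‖Kᗮ.starProjection z‖ + (a + e) * ‖L‖ * ‖t‖ := by
  set y := Kᗮ.starProjection z
  have hPL : ∀ v, Kᗮ.starProjection (L v) = L v := fun v => by
    rw [K.starProjection_orthogonal', sub_apply,
      starProjection_map_eq_zero K hL hLK, sub_zero, one_apply_eq_self]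
  have hzt : L (z - t) = L (y - t) := by
    rw [map_sub, map_sub, map_starProjection_orthogonal K hLK]
  rw [hzt]
  set w := L (y - t)
  have hw : ‖w‖ ≤ ‖L‖ * (‖y‖ + ‖t‖) :=
    (L.le_opNorm _).trans (mul_le_mul_of_nonneg_left (norm_sub_le _ _) (norm_nonneg _))
  have hsplit : Kᗮ.starProjection (z - D w) =
      (y - a • L y) + a • L t - Kᗮ.starProjection ((D - a • 1) w) := by
    have hDw : D w = a • w + (D - a • 1) w := by simp
    rw [map_sub, hDw, map_add, map_smul, hPL (y - t), map_sub]
    module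
  rw [hsplit]
  have hy := norm_sub_smul_le_of_coercive (hcoer y (Kᗮ.starProjection_apply_mem z)) ha haL hal
  have hLt : ‖a • L t‖ ≤ a * (‖L‖ * ‖t‖) := by
    rw [norm_smul, Real.norm_of_nonneg ha]
    exact mul_le_mul_of_nonneg_left (L.le_opNorm t) ha
  have hDw : ‖Kᗮ.starProjection ((D - a • 1) w)‖ ≤ e * (‖L‖ * (‖y‖ + ‖t‖)) :=
    (Kᗮ.norm_starProjection_apply_le _).trans <| ((D - a • 1).le_opNorm w).trans <|
      mul_le_mul hD hw (norm_nonneg _) ((norm_nonneg _).trans hD)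
  calc _ ≤ ‖y - a • L y‖ + ‖a • L t‖ + ‖Kᗮ.starProjection ((D - a • 1) w)‖ :=
        norm_sub_le_of_le (norm_add_le _ _) le_rfl
    _ ≤ _ := by nlinarith

theorem tendsto_norm_starProjection_orthogonal (hL : (L : E →ₗ[ℝ] E).IsSymmetric)
    (hLK : ∀ v ∈ K, L v = 0) {lam : ℝ} (hlam : 0 < lam)
    (hcoer : ∀ v ∈ Kᗮ, lam * ‖v‖ ^ 2 ≤ ⟪v, L v⟫) {a e : ℕ → ℝ} (ha0 : ∀ k, 0 ≤ a k)
    (ha : Tendsto a atTop (𝓝 0)) (ha_sum : ¬Summable a) (he : Summable e)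
    {D : ℕ → E →L[ℝ] E} (hD : ∀ k, ‖D k - a k • 1‖ ≤ e k) {z t : ℕ → E}
    (ht : Tendsto t atTop (𝓝 0)) (hz : ∀ k, z (k + 1) = z k - D k (L (z k - t k))) :
    Tendsto (fun k => ‖Kᗮ.starProjection (z k)‖) atTop (𝓝 0) := by
  have he0 : ∀ k, 0 ≤ e k := fun k => (norm_nonneg _).trans (hD k)
  have htn : Tendsto (fun k => ‖t k‖) atTop (𝓝 0) := by simpa using ht.norm
  obtain ⟨C, hC⟩ := htn.bddAbove_range
  refine tendsto_zero_of_perturbed_contractive_recursion (β := fun k => a k * lam / 2)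
    (ε := fun k => ‖L‖ * e k) (δ := fun k => 2 * ‖L‖ * ‖t k‖ / lam)
    (γ := fun k => ‖L‖ * e k * ‖t k‖) (fun k => norm_nonneg _)
    (fun k => div_nonneg (mul_nonneg (ha0 k) hlam.le) zero_le_two) ?_ ?_
    (fun k => mul_nonneg (norm_nonneg L) (he0 k)) (he.mul_left _)
    (fun k => div_nonneg (by positivity) hlam.le) ?_
    (fun k => mul_nonneg (mul_nonneg (norm_nonneg L) (he0 k)) (norm_nonneg _)) ?_ ?_
  · filter_upwards [ha.eventually_le_const (one_div_pos.2 hlam)] with k hk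
    have := mul_le_mul_of_nonneg_right hk hlam.le
    rw [one_div_mul_cancel hlam.ne'] at this
    linarith
  · exact fun h => ha_sum <| (summable_mul_right_iff hlam.ne').1 <|
      (summable_div_const_iff two_ne_zero).1 h
  · simpa using (htn.const_mul (2 * ‖L‖)).div_const lam
  · refine (he.mul_left (‖L‖ * C)).of_nonneg_of_le
      (fun k => mul_nonneg (mul_nonneg (norm_nonneg L) (he0 k)) (norm_nonneg _)) fun k => ?_
    have := mul_le_mul_of_nonneg_left (hC ⟨k, rfl⟩) (mul_nonneg (norm_nonneg L) (he0 k))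
    linarith
  · have hsmall : ∀ᶠ k in atTop, a k * ‖L‖ ^ 2 ≤ lam ∧ a k * lam ≤ 2 := by
      have h := (ha.mul_const (‖L‖ ^ 2)).eventually_le_const (by rwa [zero_mul])
      filter_upwards [h, (ha.mul_const lam).eventually_le_const
        (by norm_num : (0 : ℝ) * lam < 2)] with k h1 h2 using ⟨h1, h2⟩
    filter_upwards [hsmall] with k ⟨h1, h2⟩
    rw [hz k]
    refine (norm_starProjection_orthogonal_step_le K hL hLK hcoer (ha0 k) h1 h2 (hD k) _
      _).trans (le_of_eq ?_)
    field_simp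
    ring

theorem exists_tendsto_mem_of_perturbed_iteration [CompleteSpace E]
    (hL : (L : E →ₗ[ℝ] E).IsSymmetric) (hLK : ∀ v ∈ K, L v = 0) {lam : ℝ} (hlam : 0 < lam)
    (hcoer : ∀ v ∈ Kᗮ, lam * ‖v‖ ^ 2 ≤ ⟪v, L v⟫) {a e : ℕ → ℝ} (ha0 : ∀ k, 0 ≤ a k)
    (ha : Tendsto a atTop (𝓝 0)) (ha_sum : ¬Summable a) (he : Summable e)
    {D : ℕ → E →L[ℝ] E} (hD : ∀ k, ‖D k - a k • 1‖ ≤ e k) {u : ℕ → E} {s : E}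
    (hu : Tendsto (fun n => ∑ k ∈ range n, u k) atTop (𝓝 s)) {x : ℕ → E}
    (hx : ∀ k, x (k + 1) = x k - D k (L (x k)) + u k) :
    ∃ x' ∈ K, Tendsto x atTop (𝓝 x') := by
  -- Adding the noise still to come, `t k = s - ∑_{j<k} u j`, gives a noiseless recursion.
  set t : ℕ → E := fun n => s - ∑ k ∈ range n, u k
  have ht : Tendsto t atTop (𝓝 0) := by
    simpa using (tendsto_const_nhds (x := s)).sub hu
  set z : ℕ → E := fun k => x k + t k
  have hz : ∀ k, z (k + 1) = z k - D k (L (z k - t k)) := fun k => by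
    simp only [z, t, hx, sum_range_succ, add_sub_cancel_right]
    abel
  have hy :=
    tendsto_norm_starProjection_orthogonal K hL hLK hlam hcoer ha0 ha ha_sum he hD ht hz
  obtain ⟨C, hC⟩ := (hy.add ht.norm).bddAbove_range
  have hdist : ∀ k, dist (K.starProjection (z k)) (K.starProjection (z (k + 1))) ≤
      ‖L‖ * C * e k := fun k => by
    rw [hz k, map_sub, dist_eq_norm, sub_sub_cancel]
    refine (norm_starProjection_map_map_le K hL hLK (hD k) _).trans ?_
    have hLk : ‖L (z k - t k)‖ ≤ ‖L‖ * C := by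
      rw [map_sub, ← map_starProjection_orthogonal K hLK (z k), ← map_sub]
      exact (L.le_opNorm _).trans <| mul_le_mul_of_nonneg_left
        ((norm_sub_le _ _).trans (hC ⟨k, rfl⟩)) (norm_nonneg L)
    nlinarith [(norm_nonneg _).trans (hD k)]
  obtain ⟨q, hq⟩ := cauchySeq_tendsto_of_complete <| cauchySeq_of_summable_dist <|
    (he.mul_left _).of_nonneg_of_le (fun _ => dist_nonneg) hdist
  refine ⟨q, K.starProjection_eq_self_iff.1 (tendsto_nhds_unique ?_ hq), ?_⟩
  · have hQQ : ∀ v, K.starProjection (K.starProjection v) = K.starProjection v := fun v =>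
      K.starProjection_eq_self_iff.2 (K.starProjection_apply_mem v)
    simpa [Function.comp_def, hQQ] using (K.starProjection.continuous.tendsto q).comp hq
  · have hzq : Tendsto z atTop (𝓝 q) := by
      simpa only [K.starProjection_add_starProjection_orthogonal, add_zero] using
        hq.add (tendsto_zero_iff_norm_tendsto_zero.2 hy)
    simpa [z] using hzq.sub ht

end Consensus

open Matrix

section Laplacian

open WithLp
open scoped Matrix.Norms.L2Operator

variable {ι : Type*} [Fintype ι] [DecidableEq ι]

theorem norm_toEuclideanCLM_diagonal_le {d : ι → ℝ} {r : ℝ} (hr : 0 ≤ r)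
    (h : ∀ i, |d i| ≤ r) : ‖toEuclideanCLM (𝕜 := ℝ) (diagonal d)‖ ≤ r := by
  rw [l2_opNorm_toEuclideanCLM, l2_opNorm_diagonal]
  exact (pi_norm_le_iff_of_nonneg hr).2 fun i => by rw [Real.norm_eq_abs]; exact h i

theorem exists_tendsto_const_of_laplacian_iteration {L : Matrix ι ι ℝ} (hLsymm : L.IsSymm)
    (hL1 : L *ᵥ (fun _ => (1 : ℝ)) = 0) {lam : ℝ} (hlam : 0 < lam)
    (hgap : ∀ v : ι → ℝ, ∑ i, v i = 0 → lam * ∑ i, v i ^ 2 ≤ v ⬝ᵥ L *ᵥ v)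
    {α : ι → ℕ → ℝ} {a e : ℕ → ℝ} (ha0 : ∀ k, 0 ≤ a k) (ha : Tendsto a atTop (𝓝 0))
    (ha_sum : ¬Summable a) (he0 : ∀ k, 0 ≤ e k) (he : Summable e)
    (hαa : ∀ i k, |α i k - a k| ≤ e k) {u : ℕ → ι → ℝ}
    (hu : ∀ i, ∃ c, Tendsto (fun n => ∑ k ∈ range n, u k i) atTop (𝓝 c)) {x : ℕ → ι → ℝ}
    (hx : ∀ k, x (k + 1) = (1 - diagonal (fun i => α i k) * L) *ᵥ x k + u k) :
    ∃ c, ∀ i, Tendsto (fun k => x k i) atTop (𝓝 c) := by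
  set one : EuclideanSpace ℝ ι := toLp 2 fun _ => 1
  choose s hs using hu
  have hsymm : (toEuclideanCLM (𝕜 := ℝ) L : EuclideanSpace ℝ ι →ₗ[ℝ] _).IsSymmetric :=
    isSymmetric_toEuclideanLin_iff.2 (isHermitian_iff_isSymm.2 hLsymm)
  have hker : ∀ v ∈ ℝ ∙ one, toEuclideanCLM (𝕜 := ℝ) L v = 0 := by
    intro v hv
    obtain ⟨r, rfl⟩ := Submodule.mem_span_singleton.1 hv
    simp [one, hL1]
  have hcoer : ∀ v ∈ (ℝ ∙ one)ᗮ,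
      lam * ‖v‖ ^ 2 ≤ ⟪v, toEuclideanCLM (𝕜 := ℝ) L v⟫ := by
    intro v hv
    rw [Submodule.mem_orthogonal_singleton_iff_inner_right] at hv
    simp only [one, PiLp.inner_apply, RCLike.inner_apply, Real.ringHom_apply, mul_one] at hv
    rw [inner_toEuclideanCLM, EuclideanSpace.norm_sq_eq]
    simpa using hgap _ hv
  have hD : ∀ k, ‖toEuclideanCLM (𝕜 := ℝ) (diagonal fun i => α i k) - a k • 1‖ ≤ e k := by
    intro k
    rw [← map_one (toEuclideanCLM (𝕜 := ℝ) (n := ι)), ← map_smul, ← map_sub,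
      smul_one_eq_diagonal, diagonal_sub]
    exact norm_toEuclideanCLM_diagonal_le (he0 k) fun i => hαa i k
  have hU : Tendsto (fun n => ∑ k ∈ range n, toLp 2 (u k)) atTop (𝓝 (toLp 2 s)) := by
    simpa [← toLp_sum, Function.comp_def] using ((PiLp.continuous_toLp 2 _).tendsto s).comp
      (tendsto_pi_nhds.2 fun i => by simpa using hs i)
  obtain ⟨y, hy, hlim⟩ := exists_tendsto_mem_of_perturbed_iteration (ℝ ∙ one) hsymm hker hlam
    hcoer ha0 ha ha_sum he hD hU (x := fun k => toLp 2 (x k)) fun k => by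
      simp [hx k, sub_mulVec, mulVec_mulVec]
  obtain ⟨c, rfl⟩ := Submodule.mem_span_singleton.1 hy
  exact ⟨c, fun i => by
    simpa [one, Function.comp_def] using ((PiLp.continuous_apply 2 _ i).tendsto _).comp hlim⟩

end Laplacian

section Martingale

variable {Ω : Type*} {mΩ : MeasurableSpace Ω} {μ : Measure Ω}

theorem integral_mul_eq_zero_of_condExp_eq_zero [IsFiniteMeasure μ] {m : MeasurableSpace Ω}
    (hm : m ≤ mΩ) {f g : Ω → ℝ} (hf : StronglyMeasurable[m] f) (hf2 : MemLp f 2 μ)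
    (hg2 : MemLp g 2 μ) (hg : μ[g | m] =ᵐ[μ] 0) :
    ∫ ω, f ω * g ω ∂μ = 0 := by
  calc ∫ ω, f ω * g ω ∂μ = ∫ ω, (μ[f * g | m]) ω ∂μ := (integral_condExp hm).symm
    _ = ∫ ω, (f * μ[g | m]) ω ∂μ := integral_congr_ae <|
      condExp_mul_of_stronglyMeasurable_left hf (hf2.integrable_mul hg2) (hg2.integrable one_le_two)
    _ = 0 := by
      rw [integral_congr_ae (hg.mono fun ω h => by simp [h] : f * μ[g | m] =ᵐ[μ] 0)]
      simp

variable {ℱ : Filtration ℕ mΩ} {V : ℕ → Ω → ℝ}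

theorem stronglyMeasurable_sum_range (hV : ∀ k, StronglyMeasurable[ℱ (k + 1)] (V k)) (n : ℕ) :
    StronglyMeasurable[ℱ n] fun ω => ∑ k ∈ range n, V k ω :=
  Finset.stronglyMeasurable_fun_sum _ fun k hk => (hV k).mono (ℱ.mono (mem_range.1 hk))

theorem martingale_sum_range [IsFiniteMeasure μ] (hV : ∀ k, StronglyMeasurable[ℱ (k + 1)] (V k))
    (hVint : ∀ k, Integrable (V k) μ) (hVcond : ∀ k, μ[V k | ℱ k] =ᵐ[μ] 0) :
    Martingale (fun n ω => ∑ k ∈ range n, V k ω) ℱ μ := by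
  have hint : ∀ n, Integrable (fun ω => ∑ k ∈ range n, V k ω) μ := fun n =>
    integrable_finsetSum _ fun k _ => hVint k
  refine martingale_nat (stronglyMeasurable_sum_range hV) hint fun n => ?_
  have hsucc : (fun ω => ∑ k ∈ range (n + 1), V k ω) =
      (fun ω => ∑ k ∈ range n, V k ω) + V n := by
    ext ω
    simp [sum_range_succ]
  rw [hsucc]
  filter_upwards [condExp_add (hint n) (hVint n) (ℱ n), hVcond n] with ω h1 h2
  rw [h1, Pi.add_apply, h2,
    condExp_of_stronglyMeasurable (ℱ.le n) (stronglyMeasurable_sum_range hV n) (hint n)]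
  simp

theorem integral_sq_sum_range [IsFiniteMeasure μ] (hV : ∀ k, StronglyMeasurable[ℱ (k + 1)] (V k))
    (hV2 : ∀ k, MemLp (V k) 2 μ) (hVcond : ∀ k, μ[V k | ℱ k] =ᵐ[μ] 0) (n : ℕ) :
    ∫ ω, (∑ k ∈ range n, V k ω) ^ 2 ∂μ = ∑ k ∈ range n, ∫ ω, V k ω ^ 2 ∂μ := by
  induction n with
  | zero => simp
  | succ n ih =>
    set S := fun ω => ∑ k ∈ range n, V k ω
    have hS : MemLp S 2 μ := memLp_finsetSum _ fun k _ => hV2 k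
    have hcross : ∫ ω, S ω * V n ω ∂μ = 0 :=
      integral_mul_eq_zero_of_condExp_eq_zero (ℱ.le n) (stronglyMeasurable_sum_range hV n) hS
        (hV2 n) (hVcond n)
    have hexp : (fun ω => (∑ k ∈ range (n + 1), V k ω) ^ 2) =
        fun ω => S ω ^ 2 + 2 * (S ω * V n ω) + V n ω ^ 2 := by
      ext ω
      simp only [S, sum_range_succ]
      ring
    have h1 : Integrable (fun ω => S ω ^ 2) μ := hS.integrable_sq
    have h2 : Integrable (fun ω => 2 * (S ω * V n ω)) μ :=
      (hS.integrable_mul (hV2 n)).const_mul 2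
    rw [hexp, integral_add (f := fun ω => S ω ^ 2 + 2 * (S ω * V n ω)) (h1.add h2)
      (hV2 n).integrable_sq, integral_add h1 h2,
      integral_const_mul, hcross, ih, sum_range_succ]
    ring

theorem eLpNorm_one_le_one_add_integral_sq [IsProbabilityMeasure μ] {f : Ω → ℝ}
    (hf : MemLp f 2 μ) : eLpNorm f 1 μ ≤ ENNReal.ofReal (1 + ∫ ω, f ω ^ 2 ∂μ) := by
  have hint : Integrable f μ := hf.integrable one_le_two
  rw [eLpNorm_one_eq_lintegral_enorm, ← ofReal_integral_norm_eq_lintegral_enorm hint]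
  refine ENNReal.ofReal_le_ofReal ?_
  calc ∫ ω, ‖f ω‖ ∂μ ≤ ∫ ω, (1 + f ω ^ 2) ∂μ :=
        integral_mono hint.norm ((integrable_const 1).add hf.integrable_sq) fun ω => by
          rw [Real.norm_eq_abs]
          nlinarith [sq_abs (f ω), sq_nonneg (|f ω| - 1)]
    _ = 1 + ∫ ω, f ω ^ 2 ∂μ := by
      rw [integral_add (integrable_const 1) hf.integrable_sq]
      simp

theorem ae_exists_tendsto_sum_range [IsProbabilityMeasure μ]
    (hV : ∀ k, StronglyMeasurable[ℱ (k + 1)] (V k)) (hV2 : ∀ k, MemLp (V k) 2 μ)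
    (hVcond : ∀ k, μ[V k | ℱ k] =ᵐ[μ] 0) (hsum : Summable fun k => ∫ ω, V k ω ^ 2 ∂μ) :
    ∀ᵐ ω ∂μ, ∃ c, Tendsto (fun n => ∑ k ∈ range n, V k ω) atTop (𝓝 c) := by
  refine (martingale_sum_range hV (fun k => (hV2 k).integrable one_le_two) hVcond).submartingale
    |>.exists_ae_tendsto_of_bdd (R := (1 + ∑' k, ∫ ω, V k ω ^ 2 ∂μ).toNNReal) fun n => ?_
  refine (eLpNorm_one_le_one_add_integral_sq (memLp_finsetSum _ fun k _ => hV2 k)).trans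
    (ENNReal.ofReal_le_ofReal ?_)
  rw [integral_sq_sum_range hV hV2 hVcond n]
  linarith [hsum.sum_le_tsum (range n) fun k _ => integral_nonneg fun ω => sq_nonneg (V k ω)]

theorem ae_exists_tendsto_sum_range_mul [IsProbabilityMeasure μ] {a : ℕ → ℝ}
    (ha : Summable fun k => a k ^ 2) {W : ℕ → Ω → ℝ} {M : ℝ}
    (hW : ∀ k, StronglyMeasurable[ℱ (k + 1)] (W k)) (hW2 : ∀ k, MemLp (W k) 2 μ)
    (hWcond : ∀ k, μ[W k | ℱ k] =ᵐ[μ] 0) (hWM : ∀ k, ∫ ω, W k ω ^ 2 ∂μ ≤ M) :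
    ∀ᵐ ω ∂μ, ∃ c, Tendsto (fun n => ∑ k ∈ range n, a k * W k ω) atTop (𝓝 c) := by
  refine ae_exists_tendsto_sum_range (fun k => (hW k).const_mul (a k))
    (fun k => (hW2 k).const_mul (a k)) (fun k => ?_) ?_
  · show μ[a k • W k | ℱ k] =ᵐ[μ] 0
    filter_upwards [condExp_smul (a k) (W k) (ℱ k), hWcond k] with ω h1 h2
    simpa [h2] using h1
  · refine (ha.mul_right M).of_nonneg_of_le (fun k => integral_nonneg fun ω => sq_nonneg _)
      fun k => ?_
    simp_rw [mul_pow, integral_const_mul]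
    exact mul_le_mul_of_nonneg_left (hWM k) (sq_nonneg _)

theorem ae_forall_exists_tendsto_sum_range_mul_apply [IsProbabilityMeasure μ] {ι : Type*}
    [Fintype ι] {α : ι → ℕ → ℝ} (hα : ∀ i, Summable fun k => α i k ^ 2) {w : ℕ → Ω → ι → ℝ}
    {M : ℝ} (hw : ∀ k, Measurable[ℱ (k + 1)] (w k)) (hw2 : ∀ k, MemLp (w k) 2 μ)
    (hwcond : ∀ k i, μ[fun ω => w k ω i | ℱ k] =ᵐ[μ] 0)
    (hwM : ∀ k, ∫ ω, ∑ i, w k ω i ^ 2 ∂μ ≤ M) :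
    ∀ᵐ ω ∂μ, ∀ i, ∃ c, Tendsto (fun n => ∑ k ∈ range n, α i k * w k ω i) atTop (𝓝 c) := by
  refine ae_all_iff.2 fun i => ae_exists_tendsto_sum_range_mul (hα i)
    (fun k => ((measurable_pi_apply i).comp (hw k)).stronglyMeasurable)
    (M := M) (fun k => (hw2 k).eval i) (fun k => hwcond k i) fun k => ?_
  refine (integral_mono ((hw2 k).eval i).integrable_sq
    (integrable_finsetSum _ fun j _ => ((hw2 k).eval j).integrable_sq) fun ω => ?_).trans (hwM k)
  exact single_le_sum (fun j _ => sq_nonneg (w k ω j)) (mem_univ i)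

end Martingale

theorem almost_sure_consensus_heterogeneous_stepsizes_general {N : ℕ} (hN : 2 ≤ N)
    {Ω : Type*} {mΩ : MeasurableSpace Ω} (μ : MeasureTheory.Measure Ω) [MeasureTheory.IsProbabilityMeasure μ]
    (ℱ : MeasureTheory.Filtration ℕ mΩ)
    (L : Matrix (Fin N) (Fin N) ℝ) (hLsymm : L.IsSymm)
    (hL1 : L.mulVec (fun _ => (1 : ℝ)) = 0)
    (lam : ℝ) (hlam : 0 < lam)
    (hgap : ∀ v : Fin N → ℝ, (∑ i, v i) = 0 →
      lam * (∑ i, (v i) ^ 2) ≤ v ⬝ᵥ L.mulVec v)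
    (α : Fin N → ℕ → ℝ) (hα_pos : ∀ i k, 0 < α i k)
    (hα_div : ∀ i, Filter.Tendsto (fun n => ∑ k ∈ Finset.range n, α i k) Filter.atTop Filter.atTop)
    (hα_sq : ∀ i, Summable (fun k => (α i k) ^ 2))
    (M : ℝ)
    (w : ℕ → Ω → Fin N → ℝ)
    (hw_meas : ∀ k, Measurable[ℱ (k + 1)] (w k))
    (hw_L2 : ∀ k, MeasureTheory.MemLp (w k) 2 μ)
    (hw_cond : ∀ k i, μ[(fun ω => w k ω i) | ℱ k] =ᵐ[μ] 0)
    (hw_bound : ∀ k, ∫ ω, (∑ i, (w k ω i) ^ 2) ∂μ ≤ M)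
    (x : ℕ → Ω → Fin N → ℝ)
    (hx_meas : ∀ k, Measurable[ℱ k] (x k))
    (hrec : ∀ k ω, x (k + 1) ω =
      ((1 : Matrix (Fin N) (Fin N) ℝ)
          - (Matrix.diagonal fun i => α i k) * L).mulVec (x k ω)
        + (Matrix.diagonal fun i => α i k).mulVec (w k ω))
    (hα_sum_close : Summable fun k => ⨆ i : Fin N, ⨆ j : Fin N, |α i k - α j k|) :
    ∃ xstar : Ω → ℝ, Measurable xstar ∧
      ∀ i : Fin N, ∀ᵐ ω ∂μ,
        Tendsto (fun k => x k ω i) atTop (nhds (xstar ω)) := by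
  set i0 : Fin N := ⟨0, by omega⟩
  have hαe : ∀ i k, |α i k - α i0 k| ≤ ⨆ i : Fin N, ⨆ j : Fin N, |α i k - α j k| := fun i k =>
    (le_ciSup (Finite.bddAbove_range _) i0).trans
      (le_ciSup (f := fun i => ⨆ j, |α i k - α j k|) (Finite.bddAbove_range _) i)
  have hα0 : Tendsto (α i0) atTop (𝓝 0) := by
    simpa [Real.sqrt_sq (hα_pos i0 _).le] using (hα_sq i0).tendsto_atTop_zero.sqrt
  have hnoise := ae_forall_exists_tendsto_sum_range_mul_apply hα_sq hw_meas hw_L2 hw_cond hw_bound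
  refine ⟨fun ω => limsup (fun k => x k ω i0) atTop, Measurable.limsup fun k =>
    ((measurable_pi_apply i0).comp (hx_meas k)).mono (ℱ.le k) le_rfl, fun i => ?_⟩
  filter_upwards [hnoise] with ω hω
  obtain ⟨c, hc⟩ := exists_tendsto_const_of_laplacian_iteration hLsymm hL1 hlam hgap
    (fun k => (hα_pos i0 k).le) hα0
    ((not_summable_iff_tendsto_nat_atTop_of_nonneg fun k => (hα_pos i0 k).le).2 (hα_div i0))
    (fun k => (abs_nonneg _).trans (hαe i0 k)) hα_sum_close hαe hω (x := fun k => x k ω)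
    fun k => by
      rw [hrec k ω]
      congr 1
      exact funext fun i => mulVec_diagonal _ _ _
  rw [(hc i0).limsup_eq]
  exact hc i

/-- Corollary 3 (almost sure consensus with heterogeneous stepsizes): if the stepsize
discrepancies are summable, every agent's state converges almost surely to a common
random variable. -/
theorem almost_sure_consensus_heterogeneous_stepsizes {N : ℕ} (hN : 2 ≤ N)
    {Ω : Type*} {mΩ : MeasurableSpace Ω} (μ : MeasureTheory.Measure Ω) [MeasureTheory.IsProbabilityMeasure μ]
    (ℱ : MeasureTheory.Filtration ℕ mΩ)
    (L : Matrix (Fin N) (Fin N) ℝ) (hLsymm : L.IsSymm)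
    (hL1 : L.mulVec (fun _ => (1 : ℝ)) = 0)
    (hLoffdiag : ∀ i j, i ≠ j → L i j ≤ 0)
    (lam : ℝ) (hlam : 0 < lam)
    (hgap : ∀ v : Fin N → ℝ, (∑ i, v i) = 0 →
      lam * (∑ i, (v i) ^ 2) ≤ v ⬝ᵥ L.mulVec v)
    (α : Fin N → ℕ → ℝ) (hα_pos : ∀ i k, 0 < α i k)
    (hα_div : ∀ i, Filter.Tendsto (fun n => ∑ k ∈ Finset.range n, α i k) Filter.atTop Filter.atTop)
    (hα_sq : ∀ i, Summable (fun k => (α i k) ^ 2))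
    (hdiag : ∀ (i : Fin N) (k : ℕ), 0 < 1 - α i k * L i i)
    (M : ℝ) (hM : 0 ≤ M)
    (w : ℕ → Ω → Fin N → ℝ)
    (hw_meas : ∀ k, Measurable[ℱ (k + 1)] (w k))
    (hw_L2 : ∀ k, MeasureTheory.MemLp (w k) 2 μ)
    (hw_cond : ∀ k i, μ[(fun ω => w k ω i) | ℱ k] =ᵐ[μ] 0)
    (hw_bound : ∀ k, ∫ ω, (∑ i, (w k ω i) ^ 2) ∂μ ≤ M)
    (x : ℕ → Ω → Fin N → ℝ) (ξ : Fin N → ℝ) (hx0 : ∀ ω, x 0 ω = ξ)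
    (hx_meas : ∀ k, Measurable[ℱ k] (x k))
    (hrec : ∀ k ω, x (k + 1) ω =
      ((1 : Matrix (Fin N) (Fin N) ℝ)
          - (Matrix.diagonal fun i => α i k) * L).mulVec (x k ω)
        + (Matrix.diagonal fun i => α i k).mulVec (w k ω))
    (hα_sum_close : Summable fun k => ⨆ i : Fin N, ⨆ j : Fin N, |α i k - α j k|) :
    ∃ xstar : Ω → ℝ, Measurable xstar ∧
      ∀ i : Fin N, ∀ᵐ ω ∂μ,
        Tendsto (fun k => x k ω i) atTop (nhds (xstar ω)) :=
  almost_sure_consensus_heterogeneous_stepsizes_general hN μ ℱ L hLsymm hL1 lam hlam hgap α hα_pos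
    hα_div hα_sq M w hw_meas hw_L2 hw_cond hw_bound x hx_meas hrec hα_sum_close
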